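/- arXiv:math/0208112 — 8 statements merged into one kernel-verified Lean document; each statement's English description precedes it below -/
import Mathlib

section
/- Let $V$ be an $R$-module with endomorphisms $d_0,\dots,d_{r-1}$ ($r \ge 2$) satisfying $\sum_{i+j=n} d_i d_j = \delta_{n,r}\,\mathrm{id}_V$ for all $n$. Write $d(\lambda) = d' + d''$ on $V[\lambda]_{[0,r-1]} = \bigoplus_{i=0}^{r-1} V\lambda^i$, where $d'$ is the component landing in degrees $[0,r-1]$ (truncation mod $\lambda^r$) and $d''$ the component landing in degrees $[r,2r-1]$. Then $d'd'' + d''d' = \lambda^r \cdot \mathrm{id}$ on $V[\lambda]_{[0,r-1]}$, after extending $d', d''$ to $R[\lambda^r]$-linear endomorphisms of $V[\lambda]$. -/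
open Finset

lemma swap_sum {M : Type*} [AddCommMonoid M] (F : ℕ → ℕ → ℕ → M) (n : ℕ) :
    ∑ p ∈ Finset.HasAntidiagonal.antidiagonal n, ∑ q ∈ Finset.HasAntidiagonal.antidiagonal p.2, F p.1 q.1 q.2 =
    ∑ p ∈ Finset.HasAntidiagonal.antidiagonal n, ∑ q ∈ Finset.HasAntidiagonal.antidiagonal p.1, F q.1 q.2 p.2 := by
  rw [Finset.sum_sigma', Finset.sum_sigma']
  refine Finset.sum_nbij' (fun x => ⟨(x.1.1 + x.2.1, x.2.2), (x.1.1, x.2.1)⟩)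
    (fun x => ⟨(x.2.1, x.2.2 + x.1.2), (x.2.2, x.1.2)⟩) ?_ ?_ ?_ ?_ ?_
  · rintro ⟨⟨a, b⟩, ⟨c, e⟩⟩ hx
    simp only [Finset.mem_sigma, Finset.HasAntidiagonal.mem_antidiagonal] at hx ⊢
    obtain ⟨h1, h2⟩ := hx
    exact ⟨by omega, trivial⟩
  · rintro ⟨⟨a, b⟩, ⟨c, e⟩⟩ hx
    simp only [Finset.mem_sigma, Finset.HasAntidiagonal.mem_antidiagonal] at hx ⊢
    obtain ⟨h1, h2⟩ := hx
    exact ⟨by omega, trivial⟩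
  · rintro ⟨⟨a, b⟩, ⟨c, e⟩⟩ hx
    simp only [Finset.mem_sigma, Finset.HasAntidiagonal.mem_antidiagonal] at hx
    obtain ⟨h1, h2⟩ := hx
    simp only [Sigma.mk.inj_iff, Prod.mk.injEq, heq_eq_eq]
    refine ⟨⟨?_, ?_⟩, ?_⟩ <;> first | trivial | omega
  · rintro ⟨⟨a, b⟩, ⟨c, e⟩⟩ hx
    simp only [Finset.mem_sigma, Finset.HasAntidiagonal.mem_antidiagonal] at hx
    obtain ⟨h1, h2⟩ := hx
    simp only [Sigma.mk.inj_iff, Prod.mk.injEq, heq_eq_eq]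
    refine ⟨⟨?_, ?_⟩, ?_⟩ <;> first | trivial | omega
  · rintro ⟨⟨a, b⟩, ⟨c, e⟩⟩ hx
    rfl

/-- The component `d'` of `d(λ)` on `V[λ]` (modelled as `ℕ → V`): for an input monomial
`v·λ^j` it keeps only the terms `dᵢ(v)·λ^{i+j}` that stay in the same `λ^r`-block,
i.e. with `i + (j mod r) < r`.  This is the `R[λ^r]`-linear extension of the truncation
mod `λ^r` of `d(λ)` on `V[λ]_{[0,r-1]}`. -/
noncomputable def dLow {R V : Type*} [CommRing R] [AddCommGroup V] [Module R V]
    (r : ℕ) (d : ℕ → Module.End R V) (w : ℕ → V) : ℕ → V :=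
  fun n => ∑ p ∈ Finset.HasAntidiagonal.antidiagonal n,
    if p.1 + p.2 % r < r then d p.1 (w p.2) else 0

/-- The component `d''` of `d(λ)`: the terms `dᵢ(v)·λ^{i+j}` with `i + (j mod r) ≥ r`,
extended `R[λ^r]`-linearly. -/
noncomputable def dHigh {R V : Type*} [CommRing R] [AddCommGroup V] [Module R V]
    (r : ℕ) (d : ℕ → Module.End R V) (w : ℕ → V) : ℕ → V :=
  fun n => ∑ p ∈ Finset.HasAntidiagonal.antidiagonal n,
    if r ≤ p.1 + p.2 % r then d p.1 (w p.2) else 0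

/-- if `∑_{i+j=n} dᵢ dⱼ = δ_{n,r} id`, then on `V[λ]_{[0,r-1]}`
(functions supported in degrees `< r`) one has `d'd'' + d''d' = λ^r · id`,
i.e. `(d'(d''w) + d''(d'w)) n = w (n-r)` for `n ≥ r` and `= 0` for `n < r`. -/
theorem stmt2 {R V : Type*} [CommRing R] [AddCommGroup V] [Module R V]
    (r : ℕ) (hr : 2 ≤ r) (d : ℕ → Module.End R V)
    (hsupp : ∀ i, r ≤ i → d i = 0)
    (hsq : ∀ n : ℕ, ∑ p ∈ Finset.HasAntidiagonal.antidiagonal n, d p.1 * d p.2 =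
      if n = r then 1 else 0)
    (w : ℕ → V) (hw : ∀ j, r ≤ j → w j = 0) (n : ℕ) :
    dLow r d (dHigh r d w) n + dHigh r d (dLow r d w) n =
      if r ≤ n then w (n - r) else 0 := by
  classical
  set S : ℕ → V := fun m => ∑ p ∈ Finset.HasAntidiagonal.antidiagonal m, d p.1 (w p.2) with hS
  -- characterization of dLow w
  have hdLow : ∀ j, dLow r d w j = if j < r then S j else 0 := by
    intro j
    unfold dLow
    split
    · next h =>
      refine Finset.sum_congr rfl fun p hp => ?_
      have hpa := Finset.HasAntidiagonal.mem_antidiagonal.mp hp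
      rw [if_pos (by rw [Nat.mod_eq_of_lt (by omega)]; omega)]
    · next h =>
      refine Finset.sum_eq_zero fun p hp => ?_
      have hpa := Finset.HasAntidiagonal.mem_antidiagonal.mp hp
      by_cases h2 : p.2 < r
      · rw [if_neg (by rw [Nat.mod_eq_of_lt h2]; omega)]
      · simp [hw p.2 (le_of_not_gt h2)]
  have hdHigh : ∀ j, dHigh r d w j = if r ≤ j then S j else 0 := by
    intro j
    unfold dHigh
    split
    · next h =>
      refine Finset.sum_congr rfl fun p hp => ?_
      have hpa := Finset.HasAntidiagonal.mem_antidiagonal.mp hp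
      by_cases h2 : p.2 < r
      · rw [if_pos (by rw [Nat.mod_eq_of_lt h2]; omega)]
      · simp [hw p.2 (le_of_not_gt h2)]
    · next h =>
      refine Finset.sum_eq_zero fun p hp => ?_
      have hpa := Finset.HasAntidiagonal.mem_antidiagonal.mp hp
      rw [if_neg (by rw [Nat.mod_eq_of_lt (by omega)]; omega)]
  have hS0 : ∀ j, 2 * r - 1 ≤ j → S j = 0 := by
    intro j hj
    refine Finset.sum_eq_zero fun p hp => ?_
    have hpa := Finset.HasAntidiagonal.mem_antidiagonal.mp hp
    by_cases h1 : r ≤ p.1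
    · rw [hsupp p.1 h1]; rfl
    · rw [hw p.2 (by omega)]; exact map_zero _
  -- the key convolution identity
  have hL : ∀ m, ∑ p ∈ Finset.HasAntidiagonal.antidiagonal m, d p.1 (S p.2) =
      if r ≤ m then w (m - r) else 0 := by
    intro m
    have e1 : ∀ p : ℕ × ℕ, d p.1 (S p.2) =
        ∑ q ∈ Finset.HasAntidiagonal.antidiagonal p.2, d p.1 (d q.1 (w q.2)) := by
      intro p; rw [hS]; exact map_sum _ _ _
    calc ∑ p ∈ Finset.HasAntidiagonal.antidiagonal m, d p.1 (S p.2)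
        = ∑ p ∈ Finset.HasAntidiagonal.antidiagonal m, ∑ q ∈ Finset.HasAntidiagonal.antidiagonal p.2,
            d p.1 (d q.1 (w q.2)) := Finset.sum_congr rfl fun p _ => e1 p
      _ = ∑ p ∈ Finset.HasAntidiagonal.antidiagonal m, ∑ q ∈ Finset.HasAntidiagonal.antidiagonal p.1,
            d q.1 (d q.2 (w p.2)) := swap_sum (fun i j k => d i (d j (w k))) m
      _ = ∑ p ∈ Finset.HasAntidiagonal.antidiagonal m, (if p.1 = r then w p.2 else 0) := by
          refine Finset.sum_congr rfl fun p _ => ?_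
          have : ∑ q ∈ Finset.HasAntidiagonal.antidiagonal p.1, d q.1 (d q.2 (w p.2)) =
              (∑ q ∈ Finset.HasAntidiagonal.antidiagonal p.1, d q.1 * d q.2) (w p.2) := by
            rw [LinearMap.sum_apply]
            exact Finset.sum_congr rfl fun q _ => rfl
          rw [this, hsq p.1]
          split <;> simp
      _ = if r ≤ m then w (m - r) else 0 := by
          by_cases hm : r ≤ m
          · rw [if_pos hm]
            rw [Finset.sum_eq_single_of_mem (r, m - r)
              (Finset.HasAntidiagonal.mem_antidiagonal.mpr (by omega))]
            · rw [if_pos rfl]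
            · rintro ⟨a, b⟩ hb hne
              have := Finset.HasAntidiagonal.mem_antidiagonal.mp hb
              rw [if_neg]
              intro h
              exact hne (by simp at h ⊢; omega)
          · rw [if_neg hm]
            refine Finset.sum_eq_zero fun p hp => ?_
            have := Finset.HasAntidiagonal.mem_antidiagonal.mp hp
            rw [if_neg (by omega)]
  -- now case on n
  by_cases h1 : n < r
  · rw [if_neg (by omega)]
    have e1 : dLow r d (dHigh r d w) n = 0 := by
      unfold dLow
      refine Finset.sum_eq_zero fun p hp => ?_
      have hpa := Finset.HasAntidiagonal.mem_antidiagonal.mp hp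
      rw [hdHigh p.2, if_neg (show ¬ r ≤ p.2 by omega)]
      simp
    have e2 : dHigh r d (dLow r d w) n = 0 := by
      unfold dHigh
      refine Finset.sum_eq_zero fun p hp => ?_
      have hpa := Finset.HasAntidiagonal.mem_antidiagonal.mp hp
      have hm : p.2 % r = p.2 := Nat.mod_eq_of_lt (show p.2 < r by omega)
      rw [if_neg (show ¬ r ≤ p.1 + p.2 % r by omega)]
    rw [e1, e2, add_zero]
  · by_cases h2 : n < 2 * r
    · -- main case : r ≤ n < 2r
      rw [← hL n]
      have hfH : dHigh r d w = fun j => if r ≤ j then S j else 0 := funext hdHigh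
      have hfL : dLow r d w = fun j => if j < r then S j else 0 := funext hdLow
      rw [hfH, hfL]
      unfold dLow dHigh
      rw [← Finset.sum_add_distrib]
      refine Finset.sum_congr rfl fun p hp => ?_
      have hpa := Finset.HasAntidiagonal.mem_antidiagonal.mp hp
      by_cases hc : p.2 < r
      · have hm : p.2 % r = p.2 := Nat.mod_eq_of_lt hc
        rw [if_neg (show ¬ p.1 + p.2 % r < r by omega),
          if_pos (show r ≤ p.1 + p.2 % r by omega)]
        simp only []
        rw [if_pos hc, zero_add]
      · have hm : p.2 % r = p.2 - r := by
          rw [Nat.mod_eq_sub_mod (show r ≤ p.2 by omega),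
            Nat.mod_eq_of_lt (show p.2 - r < r by omega)]
        rw [if_pos (show p.1 + p.2 % r < r by omega),
          if_neg (show ¬ r ≤ p.1 + p.2 % r by omega)]
        simp only []
        rw [if_pos (show r ≤ p.2 by omega), add_zero]
    · -- n ≥ 2r
      rw [if_pos (by omega), hw (n - r) (by omega)]
      have e1 : dLow r d (dHigh r d w) n = 0 := by
        unfold dLow
        refine Finset.sum_eq_zero fun p hp => ?_
        have hpa := Finset.HasAntidiagonal.mem_antidiagonal.mp hp
        by_cases hc : p.2 < r
        · rw [hdHigh p.2, if_neg (show ¬ r ≤ p.2 by omega)]; simp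
        · by_cases hc2 : p.2 ≤ 2 * r - 2
          · have hm : p.2 % r = p.2 - r := by
              rw [Nat.mod_eq_sub_mod (show r ≤ p.2 by omega),
                Nat.mod_eq_of_lt (show p.2 - r < r by omega)]
            rw [if_neg (show ¬ p.1 + p.2 % r < r by omega)]
          · rw [hdHigh p.2, if_pos (show r ≤ p.2 by omega),
              hS0 p.2 (by omega)]
            simp
      have e2 : dHigh r d (dLow r d w) n = 0 := by
        unfold dHigh
        refine Finset.sum_eq_zero fun p hp => ?_
        have hpa := Finset.HasAntidiagonal.mem_antidiagonal.mp hp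
        by_cases hc : p.2 < r
        · rw [hsupp p.1 (by omega)]; simp
        · rw [hdLow p.2, if_neg (show ¬ p.2 < r by omega)]; simp
      rw [e1, e2, add_zero]
end

section
/- Let $V$ be an $R$-module with endomorphisms $d_0,\dots,d_{r-1}$ ($r \ge 2$) satisfying $\sum_{i+j=n} d_i d_j = \delta_{n,r}\,\mathrm{id}_V$ for all $n$. Let $W = V^{\oplus r}$ with differential $d_W(v_0,\dots,v_{r-1}) = (w_0,\dots,w_{r-1})$, $w_k = \sum_{i+j=k,\ j<r} d_i(v_j)$, and define $h: W \to W$ by $h(v_0,\dots,v_{r-1}) = (u_0,\dots,u_{r-1})$, $u_k = \sum_{i+j = k+r} d_i(v_j)$. Then $d_W h + h d_W = \mathrm{id}_W$, so the complex $(W, d_W)$ is homotopic to zero. -/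
open Finset

/-- on `W = V^{⊕r}` with `d_W(v)_k = ∑_{i+j=k, j<r} dᵢ(vⱼ)` and
`h(v)_k = ∑_{i+j=k+r} dᵢ(vⱼ)`, one has `d_W h + h d_W = id`, so `(W, d_W)` is
homotopic to zero.  (The `dᵢ` satisfy `∑_{i+j=n} dᵢ dⱼ = δ_{n,r} id` and `dᵢ = 0`
for `i ≥ r`.) -/
theorem stmt3 {R V : Type*} [CommRing R] [AddCommGroup V] [Module R V]
    (r : ℕ) (hr : 2 ≤ r) (d : ℕ → Module.End R V)
    (hsupp : ∀ i, r ≤ i → d i = 0)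
    (hsq : ∀ n : ℕ, ∑ p ∈ Finset.HasAntidiagonal.antidiagonal n, d p.1 * d p.2 =
      if n = r then 1 else 0)
    (dW hW : (Fin r → V) → (Fin r → V))
    (hdW : ∀ (v : Fin r → V) (k : Fin r),
      dW v k = ∑ j : Fin r, if (j : ℕ) ≤ (k : ℕ) then d ((k : ℕ) - (j : ℕ)) (v j) else 0)
    (hhW : ∀ (v : Fin r → V) (k : Fin r),
      hW v k = ∑ j : Fin r, d ((k : ℕ) + r - (j : ℕ)) (v j)) :
    ∀ (v : Fin r → V) (k : Fin r), dW (hW v) k + hW (dW v) k = v k := by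
  intro v k
  have hk := k.isLt
  simp only [hdW, hhW]
  have e1 : ∀ j : Fin r,
      (if (j:ℕ) ≤ (k:ℕ) then d ((k:ℕ)-(j:ℕ)) (∑ m : Fin r, d ((j:ℕ)+r-(m:ℕ)) (v m)) else 0)
      = ∑ m : Fin r, if (j:ℕ) ≤ (k:ℕ) then d ((k:ℕ)-(j:ℕ)) (d ((j:ℕ)+r-(m:ℕ)) (v m)) else 0 := by
    intro j
    split_ifs with h
    · rw [map_sum]
    · simp
  have e2 : ∀ j : Fin r,
      d ((k:ℕ)+r-(j:ℕ)) (∑ m : Fin r, if (m:ℕ) ≤ (j:ℕ) then d ((j:ℕ)-(m:ℕ)) (v m) else 0)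
      = ∑ m : Fin r, if (m:ℕ) ≤ (j:ℕ) then d ((k:ℕ)+r-(j:ℕ)) (d ((j:ℕ)-(m:ℕ)) (v m)) else 0 := by
    intro j
    rw [map_sum]
    refine Finset.sum_congr rfl fun m _ => ?_
    split_ifs with h
    · rfl
    · simp
  simp only [e1, e2]
  conv_lhs => lhs; rw [Finset.sum_comm]
  conv_lhs => rhs; rw [Finset.sum_comm]
  rw [← Finset.sum_add_distrib]
  have key : ∀ m : Fin r,
      ((∑ j : Fin r, if (j:ℕ) ≤ (k:ℕ) then d ((k:ℕ)-(j:ℕ)) (d ((j:ℕ)+r-(m:ℕ)) (v m)) else 0)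
      + ∑ j : Fin r, if (m:ℕ) ≤ (j:ℕ) then d ((k:ℕ)+r-(j:ℕ)) (d ((j:ℕ)-(m:ℕ)) (v m)) else 0)
      = if m = k then v m else 0 := by
    intro m
    have hm := m.isLt
    rw [Fin.sum_univ_eq_sum_range
      (fun j => if j ≤ (k:ℕ) then d ((k:ℕ)-j) (d (j+r-(m:ℕ)) (v m)) else 0) r]
    rw [Fin.sum_univ_eq_sum_range
      (fun j => if (m:ℕ) ≤ j then d ((k:ℕ)+r-j) (d (j-(m:ℕ)) (v m)) else 0) r]
    rw [← Finset.sum_filter, ← Finset.sum_filter]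
    have h1 : ∑ p ∈ Finset.HasAntidiagonal.antidiagonal ((k:ℕ)+r-(m:ℕ)), d p.1 (d p.2 (v m))
        = if m = k then v m else 0 := by
      have h := congrArg (fun (f : Module.End R V) => f (v m)) (hsq ((k:ℕ)+r-(m:ℕ)))
      simp only [LinearMap.coe_sum, Finset.sum_apply, Module.End.mul_apply, apply_ite,
        Module.End.one_apply, LinearMap.zero_apply] at h
      rw [h]
      rcases eq_or_ne m k with h2 | h2
      · subst h2; rw [if_pos (by omega), if_pos rfl]; simp
      · have hne : (m:ℕ) ≠ (k:ℕ) := fun hh => h2 (Fin.ext hh)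
        rw [if_neg (by omega), if_neg h2]; simp
    rw [← h1,
      ← Finset.sum_filter_add_sum_filter_not (Finset.HasAntidiagonal.antidiagonal ((k:ℕ)+r-(m:ℕ)))
        (fun p => p.1 ≤ (k:ℕ))]
    congr 1
    · refine Finset.sum_nbij' (fun j => ((k:ℕ)-j, j+r-(m:ℕ))) (fun p => (k:ℕ)-p.1)
        ?_ ?_ ?_ ?_ ?_
      · intro a ha
        simp only [Finset.mem_filter, Finset.mem_range] at ha
        simp only [Finset.mem_filter, Finset.HasAntidiagonal.mem_antidiagonal]
        omega
      · intro p hp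
        simp only [Finset.mem_filter, Finset.HasAntidiagonal.mem_antidiagonal] at hp
        simp only [Finset.mem_filter, Finset.mem_range]
        omega
      · intro a ha
        simp only [Finset.mem_filter, Finset.mem_range] at ha
        try dsimp only
        omega
      · intro p hp
        simp only [Finset.mem_filter, Finset.HasAntidiagonal.mem_antidiagonal] at hp
        have : (k:ℕ) - ((k:ℕ) - p.1) = p.1 := by omega
        simp only [this]
        try dsimp only
        ext <;> simp <;> omega
      · intro a ha
        rfl
    · refine Finset.sum_nbij' (fun j => ((k:ℕ)+r-j, j-(m:ℕ))) (fun p => (k:ℕ)+r-p.1)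
        ?_ ?_ ?_ ?_ ?_
      · intro a ha
        simp only [Finset.mem_filter, Finset.mem_range] at ha
        simp only [Finset.mem_filter, Finset.HasAntidiagonal.mem_antidiagonal]
        omega
      · intro p hp
        simp only [Finset.mem_filter, Finset.HasAntidiagonal.mem_antidiagonal] at hp
        simp only [Finset.mem_filter, Finset.mem_range]
        omega
      · intro a ha
        simp only [Finset.mem_filter, Finset.mem_range] at ha
        try dsimp only
        omega
      · intro p hp
        simp only [Finset.mem_filter, Finset.HasAntidiagonal.mem_antidiagonal] at hp
        try dsimp only
        ext <;> simp <;> omega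
      · intro a ha
        rfl
  rw [Finset.sum_congr rfl fun m _ => key m, Finset.sum_ite_eq' Finset.univ k v]
  simp
end

section
/- Let $V$ be a $\mathbb{Z}/2$-graded $R$-module and $d$ an odd endomorphism of $V$ with $d^2 = -(f_1 \cdots f_r)\,\mathrm{id}_V$, where $f_1,\dots,f_r \in R$. For each $i$ define an odd endomorphism $d_i$ of $V \oplus V[1]$ by $d_i(x,x') = (d(x) + (\prod_{j\neq i} f_j)\, x',\ -d(x') + f_i\, x)$. Then $d_i^2 = 0$ for each $i = 1,\dots,r$. -/
open Finset

/-- Let `V` be a `ℤ/2`-graded module (the grading is recorded by an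
involution `σ`) with an odd endomorphism `d` satisfying `d² = -(f₁⋯f_r)·id`.
For each `i`, the odd endomorphism `dᵢ(x,x') = (d x + (∏_{j≠i} fⱼ)·x', -d x' + fᵢ·x)`
of `V ⊕ V[1]` satisfies `dᵢ² = 0`. -/
theorem stmt5 {R V : Type*} [CommRing R] [AddCommGroup V] [Module R V]
    (σ : Module.End R V) (hσ : σ * σ = 1)
    (d : Module.End R V) (hodd : d * σ = -(σ * d))
    (r : ℕ) (f : Fin r → R)
    (hsq : ∀ v : V, d (d v) = -((∏ j, f j) • v))
    (i : Fin r) (Di : V × V → V × V)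
    (hDi : ∀ (x x' : V),
      Di (x, x') = (d x + (∏ j ∈ univ.erase i, f j) • x', -(d x') + f i • x)) :
    ∀ p : V × V, Di (Di p) = 0 := by
  rintro ⟨x, x'⟩
  have hP : f i * ∏ j ∈ univ.erase i, f j = ∏ j, f j :=
    Finset.mul_prod_erase univ f (mem_univ i)
  rw [hDi, hDi]
  apply Prod.ext <;> simp [hsq, smul_smul, mul_comm, hP, smul_sub, smul_add, add_comm] <;> abel
end

section
/- Let $V$ be a $\mathbb{Z}/2$-graded $R$-module with odd $d$ satisfying $d^2 = -(f_1\cdots f_r)\mathrm{id}$, $f_i \in R$. Define $D$ on $W = (V \oplus V[1])^{\oplus r}$ by $D(x_i, x_i')_{i=1}^r = (y_i, y_i')_{i=1}^r$ with $y_i = dx_i + f_{i+1}\cdots f_r \cdot [x_1' + f_1 x_2' + f_1 f_2 x_3' + \cdots + f_1\cdots f_{i-1} x_i']$ for $i < r$, $y_r = dx_r + x_1' + f_1 x_2' + \cdots + f_1\cdots f_{r-1} x_r'$, $y_i' = -dx_i' + f_i x_i - x_{i-1}$ for $i \ge 2$, and $y_1' = -dx_1' + f_1 x_1$. Then $D^2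 = 0$. -/
open Finset

section aux

variable {R : Type*} [CommRing R] {r : ℕ}

lemma aux_filter_le_zero (i : Fin r) (h0 : (i : ℕ) = 0) :
    univ.filter (fun j : Fin r => j ≤ i) = {i} := by
  ext j
  simp only [mem_filter, mem_univ, true_and, mem_singleton, Fin.le_def, Fin.ext_iff, h0]
  omega

lemma aux_filter_lt_zero (i : Fin r) (h0 : (i : ℕ) = 0) :
    univ.filter (fun j : Fin r => j < i) = ∅ := by
  ext j
  simp only [mem_filter, mem_univ, true_and, Fin.lt_def, notMem_empty, iff_false, h0]
  omega

lemma aux_not_mem_lt (i : Fin r) : i ∉ univ.filter (fun k : Fin r => k < i) := by simp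

lemma aux_not_mem_gt (i : Fin r) : i ∉ univ.filter (fun k : Fin r => i < k) := by simp

lemma aux_filter_le_succ (i' i : Fin r) (h : (i' : ℕ) + 1 = (i : ℕ)) :
    univ.filter (fun j : Fin r => j ≤ i) = insert i (univ.filter (fun j => j ≤ i')) := by
  ext j
  simp only [mem_filter, mem_univ, true_and, mem_insert, Fin.le_def, Fin.ext_iff]
  omega

lemma aux_filter_lt_succ (i' i : Fin r) (h : (i' : ℕ) + 1 = (i : ℕ)) :
    univ.filter (fun j : Fin r => j < i) = insert i' (univ.filter (fun j => j < i')) := by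
  ext j
  simp only [mem_filter, mem_univ, true_and, mem_insert, Fin.lt_def, Fin.ext_iff]
  omega

lemma aux_filter_gt_succ (i' i : Fin r) (h : (i' : ℕ) + 1 = (i : ℕ)) :
    univ.filter (fun j : Fin r => i' < j) = insert i (univ.filter (fun j => i < j)) := by
  ext j
  simp only [mem_filter, mem_univ, true_and, mem_insert, Fin.lt_def, Fin.ext_iff]
  omega

lemma aux_not_mem_le (i' i : Fin r) (h : (i' : ℕ) + 1 = (i : ℕ)) :
    i ∉ univ.filter (fun j : Fin r => j ≤ i') := by
  simp only [mem_filter, mem_univ, true_and, Fin.le_def]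
  omega

lemma aux_prod_split (f : Fin r → R) (i : Fin r) :
    (∏ j, f j) = (∏ j ∈ univ.filter (fun j => i < j), f j) *
      (f i * ∏ k ∈ univ.filter (fun k => k < i), f k) := by
  have h1 : univ.filter (fun k : Fin r => ¬ k < i)
      = insert i (univ.filter (fun k => i < k)) := by
    ext j
    simp only [mem_filter, mem_univ, true_and, mem_insert, Fin.lt_def, Fin.ext_iff]
    omega
  calc ∏ j, f j
      = (∏ j ∈ univ.filter (fun j => j < i), f j) *
        ∏ j ∈ univ.filter (fun j => ¬ j < i), f j :=
        (prod_filter_mul_prod_filter_not univ _ f).symm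
    _ = _ := by rw [h1, prod_insert (aux_not_mem_gt i)]; ring

lemma aux_tele {V : Type*} [AddCommGroup V] [Module R V] (f : Fin r → R) (x : Fin r → V) :
    ∀ (n : ℕ) (i : Fin r), (i : ℕ) = n →
    ∑ j ∈ univ.filter (fun j => j ≤ i),
      (∏ k ∈ univ.filter (fun k => k < j), f k) •
        (f j • x j - (if h : (j : ℕ) = 0 then 0
          else x ⟨(j : ℕ) - 1, lt_of_le_of_lt (Nat.sub_le _ _) j.isLt⟩))
    = ((∏ k ∈ univ.filter (fun k => k < i), f k) * f i) • x i := by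
  intro n
  induction n with
  | zero =>
    intro i hi
    rw [aux_filter_le_zero i hi, sum_singleton, dif_pos hi, sub_zero, mul_smul]
  | succ m ih =>
    intro i hi
    have hm : m < r := by omega
    set i' : Fin r := ⟨m, hm⟩ with hi'
    have h : (i' : ℕ) + 1 = (i : ℕ) := by simp [hi', hi]
    rw [aux_filter_le_succ i' i h, sum_insert (aux_not_mem_le i' i h), ih i' rfl]
    have hQ : (∏ k ∈ univ.filter (fun k => k < i), f k)
        = (∏ k ∈ univ.filter (fun k => k < i'), f k) * f i' := by
      rw [aux_filter_lt_succ i' i h, prod_insert (aux_not_mem_lt i')]; ring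
    have hne : (i : ℕ) ≠ 0 := by omega
    rw [dif_neg hne]
    have hx : x ⟨(i : ℕ) - 1, lt_of_le_of_lt (Nat.sub_le _ _) i.isLt⟩ = x i' := by
      congr 1
      exact Fin.ext (by simp [hi', hi])
    rw [hx, hQ, smul_sub]
    module

end aux

/-- with `d` an odd endomorphism (`σ` records the `ℤ/2`-grading) of `V`
satisfying `d² = -(f₁⋯f_r)·id`, the endomorphism `D` of `W = (V ⊕ V[1])^{⊕r}`
defined by (0-based indexing, `i = 0, …, r-1`):
`yᵢ = d xᵢ + (∏_{j>i} fⱼ)·∑_{j≤i} (∏_{k<j} f_k)·x'ⱼ`,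
`y'ᵢ = -d x'ᵢ + fᵢ·xᵢ - x_{i-1}` (the last term being absent for `i = 0`),
satisfies `D² = 0`. -/
theorem stmt6 {R V : Type*} [CommRing R] [AddCommGroup V] [Module R V]
    (σ : Module.End R V) (hσ : σ * σ = 1)
    (d : Module.End R V) (hodd : d * σ = -(σ * d))
    (r : ℕ) (f : Fin r → R)
    (hsq : ∀ v : V, d (d v) = -((∏ j, f j) • v))
    (D : (Fin r → V) × (Fin r → V) → (Fin r → V) × (Fin r → V))
    (hD : ∀ (x x' : Fin r → V),
      D (x, x') =
        (fun i => d (x i) + (∏ j ∈ univ.filter (fun j => i < j), f j) •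
            (∑ j ∈ univ.filter (fun j => j ≤ i),
              (∏ k ∈ univ.filter (fun k => k < j), f k) • x' j),
         fun i => -(d (x' i)) + f i • x i -
            (if h : (i : ℕ) = 0 then 0
             else x ⟨(i : ℕ) - 1, lt_of_le_of_lt (Nat.sub_le _ _) i.isLt⟩))) :
    ∀ w, D (D w) = 0 := by
  rintro ⟨x, x'⟩
  rw [hD, hD, Prod.mk_eq_zero]
  constructor <;> funext i <;> simp only [Pi.zero_apply]
  · -- first component
    have hsum : ∑ j ∈ univ.filter (fun j => j ≤ i),
        (∏ k ∈ univ.filter (fun k => k < j), f k) •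
          (-(d (x' j)) + f j • x j -
            (if h : (j : ℕ) = 0 then 0
             else x ⟨(j : ℕ) - 1, lt_of_le_of_lt (Nat.sub_le _ _) j.isLt⟩))
        = -(∑ j ∈ univ.filter (fun j => j ≤ i),
              (∏ k ∈ univ.filter (fun k => k < j), f k) • d (x' j))
          + ((∏ k ∈ univ.filter (fun k => k < i), f k) * f i) • x i := by
      simp only [add_sub_assoc, smul_add, smul_neg]
      rw [sum_add_distrib, aux_tele f x (i : ℕ) i rfl, neg_add_eq_sub]
      rw [sum_neg_distrib]
      abel
    rw [hsum, map_add, map_smul, map_sum]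
    simp only [map_smul, hsq]
    rw [aux_prod_split f i]
    module
  · -- second component
    by_cases h0 : (i : ℕ) = 0
    · simp only [dif_pos h0, sub_zero]
      rw [aux_filter_le_zero i h0, sum_singleton, aux_filter_lt_zero i h0, prod_empty, one_smul]
      rw [map_add, map_neg, map_smul, hsq]
      rw [aux_prod_split f i, aux_filter_lt_zero i h0, prod_empty]
      module
    · have hm : (i : ℕ) - 1 < r := lt_of_le_of_lt (Nat.sub_le _ _) i.isLt
      set i' : Fin r := ⟨(i : ℕ) - 1, hm⟩ with hi'
      have h : (i' : ℕ) + 1 = (i : ℕ) := by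
        simp only [hi']
        omega
      simp only [dif_neg h0]
      rw [aux_filter_le_succ i' i h, sum_insert (aux_not_mem_le i' i h)]
      rw [aux_filter_gt_succ i' i h, prod_insert (aux_not_mem_gt i)]
      rw [map_sub, map_add, map_neg, map_smul, hsq]
      rw [aux_prod_split f i]
      module
end

section
/- With $W$ and $D$ as above (from $d^2 = -(f_1\cdots f_r)\mathrm{id}$), define $h: W \to W$ by $h(x_i,x_i')_{i=1}^r = (y_i,y_i')$ where $y_i = -[x_{i+1}' + f_{i+1} x_{i+2}' + f_{i+1}f_{i+2} x_{i+3}' + \cdots + f_{i+1}\cdots f_{r-1} x_r']$ for $i < r-1$, $y_{r-1} = -x_r'$, $y_r = 0$, $y_1' = x_r$, and $y_i' = 0$ for $i \ge 2$. Then $Dh + hD = \mathrm{id}_W$; in particular the complex $(W,D)$ is exact. -/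
open Finset

section
variable {R V : Type*} [CommRing R] [AddCommGroup V] [Module R V]

private lemma stmt7_ins_lt {r : ℕ} (p i : Fin r) (hpi : (p:ℕ) + 1 = (i:ℕ)) :
    univ.filter (fun k => p < k) = insert i (univ.filter (fun k => i < k)) := by
  ext k
  simp only [mem_filter, mem_univ, true_and, mem_insert, Fin.lt_def, Fin.ext_iff]
  omega

private lemma stmt7_ins_between {r : ℕ} (p i j : Fin r) (hpi : (p:ℕ) + 1 = (i:ℕ))
    (hij : i < j) :
    univ.filter (fun k => p < k ∧ k < j) = insert i (univ.filter (fun k => i < k ∧ k < j)) := by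
  rw [Fin.lt_def] at hij
  ext k
  simp only [mem_filter, mem_univ, true_and, mem_insert, Fin.lt_def, Fin.ext_iff]
  omega

private lemma stmt7_ins_zero {r : ℕ} (z j : Fin r) (hz : (z:ℕ) = 0) (hj : z < j) :
    univ.filter (fun k => k < j) = insert z (univ.filter (fun k => z < k ∧ k < j)) := by
  rw [Fin.lt_def] at hj
  ext k
  simp only [mem_filter, mem_univ, true_and, mem_insert, Fin.lt_def, Fin.ext_iff]
  omega

private lemma stmt7_univ_ins {r : ℕ} (z : Fin r) (hz : (z:ℕ) = 0) :
    (univ : Finset (Fin r)) = insert z (univ.filter (fun k => z < k)) := by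
  ext k
  simp only [mem_univ, mem_insert, mem_filter, true_and, Fin.lt_def, Fin.ext_iff, true_iff]
  omega

private lemma stmt7_tele {r : ℕ} (hr : 0 < r) (f : Fin r → R) (x : Fin r → V) :
    ∀ (n : ℕ) (i : Fin r), (i:ℕ) + n + 1 = r →
    ∑ j ∈ univ.filter (fun j => i < j),
        (∏ k ∈ univ.filter (fun k => i < k ∧ k < j), f k) •
          (f j • x j - (if _ : (j:ℕ) = 0 then 0
            else x ⟨(j:ℕ) - 1, lt_of_le_of_lt (Nat.sub_le _ _) j.isLt⟩))
      = (∏ k ∈ univ.filter (fun k => i < k), f k) • x ⟨r - 1, Nat.sub_lt hr Nat.one_pos⟩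
        - x i := by
  intro n
  induction n with
  | zero =>
    intro i hi
    have h1 : univ.filter (fun j : Fin r => i < j) = ∅ := by
      ext j
      simp only [mem_filter, mem_univ, true_and, notMem_empty, iff_false, Fin.lt_def, not_lt]
      have := j.isLt; omega
    have h2 : (⟨r - 1, Nat.sub_lt hr Nat.one_pos⟩ : Fin r) = i := Fin.ext (by simp; omega)
    rw [h1, h2]
    simp
  | succ n ih =>
    intro i hi
    have hi' : (i:ℕ) + 1 < r := by omega
    have hins := stmt7_ins_lt i ⟨(i:ℕ)+1, hi'⟩ rfl
    rw [hins, Finset.sum_insert (by simp), Finset.prod_insert (by simp)]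
    have hQ : univ.filter (fun k => i < k ∧ k < (⟨(i:ℕ)+1, hi'⟩ : Fin r)) = ∅ := by
      ext k
      simp only [mem_filter, mem_univ, true_and, notMem_empty, iff_false, Fin.lt_def, not_and,
        not_lt]
      omega
    have hd : (if _ : ((⟨(i:ℕ)+1, hi'⟩ : Fin r) :ℕ) = 0 then (0:V)
        else x ⟨((⟨(i:ℕ)+1, hi'⟩ : Fin r):ℕ) - 1,
          lt_of_le_of_lt (Nat.sub_le _ _) (⟨(i:ℕ)+1, hi'⟩ : Fin r).isLt⟩) = x i := by
      rw [dif_neg (by simp)]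
      exact congrArg x (Fin.ext (by simp))
    rw [hQ, Finset.prod_empty, one_smul, hd]
    have hrest : ∑ j ∈ univ.filter (fun j => (⟨(i:ℕ)+1, hi'⟩ : Fin r) < j),
        (∏ k ∈ univ.filter (fun k => i < k ∧ k < j), f k) •
          (f j • x j - (if _ : (j:ℕ) = 0 then 0
            else x ⟨(j:ℕ) - 1, lt_of_le_of_lt (Nat.sub_le _ _) j.isLt⟩))
        = f ⟨(i:ℕ)+1, hi'⟩ • ∑ j ∈ univ.filter (fun j => (⟨(i:ℕ)+1, hi'⟩ : Fin r) < j),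
        (∏ k ∈ univ.filter (fun k => (⟨(i:ℕ)+1, hi'⟩ : Fin r) < k ∧ k < j), f k) •
          (f j • x j - (if _ : (j:ℕ) = 0 then 0
            else x ⟨(j:ℕ) - 1, lt_of_le_of_lt (Nat.sub_le _ _) j.isLt⟩)) := by
      rw [Finset.smul_sum]
      refine Finset.sum_congr rfl fun j hj => ?_
      have hij : (⟨(i:ℕ)+1, hi'⟩ : Fin r) < j := by simpa using hj
      rw [stmt7_ins_between i ⟨(i:ℕ)+1, hi'⟩ j rfl hij, Finset.prod_insert (by simp),
        mul_smul]
    rw [hrest, ih ⟨(i:ℕ)+1, hi'⟩ (by simp; omega)]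
    rw [smul_sub, smul_smul]
    abel

end

/-- with `W = (V ⊕ V[1])^{⊕r}` and the differential `D` as in the
previous statement, the map `h` defined by (0-based indexing)
`yᵢ = -∑_{j>i} (∏_{i<k<j} f_k)·x'ⱼ`, `y'₀ = x_{r-1}`, `y'ᵢ = 0` for `i ≥ 1`,
satisfies `Dh + hD = id`; in particular the complex `(W, D)` is exact. -/
theorem stmt7 {R V : Type*} [CommRing R] [AddCommGroup V] [Module R V]
    (σ : Module.End R V) (hσ : σ * σ = 1)
    (d : Module.End R V) (hodd : d * σ = -(σ * d))
    (r : ℕ) (hr : 0 < r) (f : Fin r → R)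
    (hsq : ∀ v : V, d (d v) = -((∏ j, f j) • v))
    (D h : (Fin r → V) × (Fin r → V) → (Fin r → V) × (Fin r → V))
    (hD : ∀ (x x' : Fin r → V),
      D (x, x') =
        (fun i => d (x i) + (∏ j ∈ univ.filter (fun j => i < j), f j) •
            (∑ j ∈ univ.filter (fun j => j ≤ i),
              (∏ k ∈ univ.filter (fun k => k < j), f k) • x' j),
         fun i => -(d (x' i)) + f i • x i -
            (if _ : (i : ℕ) = 0 then 0
             else x ⟨(i : ℕ) - 1, lt_of_le_of_lt (Nat.sub_le _ _) i.isLt⟩)))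
    (hh : ∀ (x x' : Fin r → V),
      h (x, x') =
        (fun i => -(∑ j ∈ univ.filter (fun j => i < j),
              (∏ k ∈ univ.filter (fun k => i < k ∧ k < j), f k) • x' j),
         fun (i : Fin r) => if (i : ℕ) = 0 then x ⟨r - 1, Nat.sub_lt hr Nat.one_pos⟩ else 0)) :
    (∀ w, D (h w) + h (D w) = w) ∧ (∀ w, D w = 0 → ∃ u, D u = w) := by
  have part1 : ∀ w, D (h w) + h (D w) = w := by
    rintro ⟨x, x'⟩
    rw [hh x x', hD x x', hD, hh]
    rw [Prod.mk_add_mk, Prod.ext_iff]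
    constructor
    · funext i
      simp only [Pi.add_apply, map_neg, map_sum, map_smul]
      have hS : (∑ j ∈ univ.filter (fun j => j ≤ i),
          (∏ k ∈ univ.filter (fun k => k < j), f k) •
            (if (j:ℕ) = 0 then x ⟨r - 1, Nat.sub_lt hr Nat.one_pos⟩ else 0))
          = x ⟨r - 1, Nat.sub_lt hr Nat.one_pos⟩ := by
        rw [Finset.sum_eq_single (⟨0, hr⟩ : Fin r)]
        · have he : univ.filter (fun k => k < (⟨0, hr⟩ : Fin r)) = ∅ := by
            ext k; simp [Fin.lt_def]
          rw [he]; simp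
        · intro b _ hb
          rw [if_neg (fun hc => hb (Fin.ext (by simp [hc]))), smul_zero]
        · intro habs
          exact absurd (show (⟨0, hr⟩ : Fin r) ∈ univ.filter (fun j => j ≤ i) from
            Finset.mem_filter.mpr ⟨Finset.mem_univ _, Fin.le_def.mpr (Nat.zero_le _)⟩) habs
      rw [hS]
      have key : ∑ j ∈ univ.filter (fun j => i < j),
            (∏ k ∈ univ.filter (fun k => i < k ∧ k < j), f k) • d (x' j)
          + ∑ j ∈ univ.filter (fun j => i < j),
            (∏ k ∈ univ.filter (fun k => i < k ∧ k < j), f k) •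
              (-d (x' j) + f j • x j - (if _ : (j:ℕ) = 0 then 0
                else x ⟨(j:ℕ) - 1, lt_of_le_of_lt (Nat.sub_le _ _) j.isLt⟩))
          = (∏ k ∈ univ.filter (fun k => i < k), f k) •
              x ⟨r - 1, Nat.sub_lt hr Nat.one_pos⟩ - x i := by
        rw [← Finset.sum_add_distrib]
        have hcong : ∀ j ∈ univ.filter (fun j => i < j),
            (∏ k ∈ univ.filter (fun k => i < k ∧ k < j), f k) • d (x' j)
            + (∏ k ∈ univ.filter (fun k => i < k ∧ k < j), f k) •
              (-d (x' j) + f j • x j - (if _ : (j:ℕ) = 0 then 0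
                else x ⟨(j:ℕ) - 1, lt_of_le_of_lt (Nat.sub_le _ _) j.isLt⟩))
            = (∏ k ∈ univ.filter (fun k => i < k ∧ k < j), f k) •
              (f j • x j - (if _ : (j:ℕ) = 0 then 0
                else x ⟨(j:ℕ) - 1, lt_of_le_of_lt (Nat.sub_le _ _) j.isLt⟩)) := by
          intro j _
          rw [← smul_add]
          congr 1
          abel
        rw [Finset.sum_congr rfl hcong]
        exact stmt7_tele hr f x (r - 1 - (i:ℕ)) i (by have := i.isLt; omega)
      rw [show ∀ (a b c : V), -a + c + -b = c - (a + b) from fun a b c => by abel, key]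
      abel
    · funext i
      simp only [Pi.add_apply]
      have hfA : f i • -(∑ j ∈ univ.filter (fun j => i < j),
            (∏ k ∈ univ.filter (fun k => i < k ∧ k < j), f k) • x' j)
          = -(∑ j ∈ univ.filter (fun j => i < j),
            (f i * ∏ k ∈ univ.filter (fun k => i < k ∧ k < j), f k) • x' j) := by
        rw [smul_neg, Finset.smul_sum]
        congr 1
        exact Finset.sum_congr rfl fun j _ => smul_smul _ _ _
      by_cases hi : (i : ℕ) = 0
      · rw [if_pos hi, dif_pos hi, if_pos hi]
        have hPL : univ.filter
            (fun j => (⟨r - 1, Nat.sub_lt hr Nat.one_pos⟩ : Fin r) < j) = ∅ := by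
          ext k
          simp only [mem_filter, mem_univ, true_and, notMem_empty, iff_false, Fin.lt_def,
            not_lt]
          have := k.isLt; omega
        have hSL : univ.filter
            (fun j => j ≤ (⟨r - 1, Nat.sub_lt hr Nat.one_pos⟩ : Fin r)) = univ := by
          ext k
          simp only [mem_filter, mem_univ, true_and, iff_true, Fin.le_def]
          have := k.isLt; omega
        have hsplit : ∑ j ∈ (univ : Finset (Fin r)),
              (∏ k ∈ univ.filter (fun k => k < j), f k) • x' j
            = x' i + ∑ j ∈ univ.filter (fun j => i < j),
              (f i * ∏ k ∈ univ.filter (fun k => i < k ∧ k < j), f k) • x' j := by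
          have hone := Finset.sum_insert (s := univ.filter (fun k => i < k)) (a := i)
            (f := fun j => (∏ k ∈ univ.filter (fun k => k < j), f k) • x' j) (by simp)
          beta_reduce at hone
          rw [← stmt7_univ_ins i hi] at hone
          rw [hone]
          congr 1
          · have he : univ.filter (fun k => k < i) = ∅ := by
              ext k
              simp only [mem_filter, mem_univ, true_and, notMem_empty, iff_false, Fin.lt_def,
                not_lt]
              omega
            rw [he, Finset.prod_empty, one_smul]
          · refine Finset.sum_congr rfl fun j hj => ?_
            have hij : i < j := by simpa using hj
            rw [stmt7_ins_zero i j hi hij, Finset.prod_insert (by simp)]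
        rw [hPL, Finset.prod_empty, one_smul, hSL, hsplit, hfA]
        abel
      · rw [if_neg hi, dif_neg hi, if_neg hi, map_zero, neg_zero]
        have hp1 : (((⟨(i:ℕ) - 1, lt_of_le_of_lt (Nat.sub_le _ _) i.isLt⟩ : Fin r)) : ℕ) + 1
            = (i : ℕ) := by
          show (i:ℕ) - 1 + 1 = (i:ℕ)
          omega
        rw [stmt7_ins_lt ⟨(i:ℕ) - 1, lt_of_le_of_lt (Nat.sub_le _ _) i.isLt⟩ i hp1,
          Finset.sum_insert (by simp)]
        have he2 : univ.filter (fun k =>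
            (⟨(i:ℕ) - 1, lt_of_le_of_lt (Nat.sub_le _ _) i.isLt⟩ : Fin r) < k ∧ k < i) = ∅ := by
          ext k
          simp only [mem_filter, mem_univ, true_and, notMem_empty, iff_false, Fin.lt_def,
            not_and, not_lt]
          omega
        rw [he2, Finset.prod_empty, one_smul]
        have hrest : ∑ j ∈ univ.filter (fun j => i < j),
              (∏ k ∈ univ.filter (fun k =>
                (⟨(i:ℕ) - 1, lt_of_le_of_lt (Nat.sub_le _ _) i.isLt⟩ : Fin r) < k ∧ k < j),
                  f k) • x' j
            = ∑ j ∈ univ.filter (fun j => i < j),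
              (f i * ∏ k ∈ univ.filter (fun k => i < k ∧ k < j), f k) • x' j := by
          refine Finset.sum_congr rfl fun j hj => ?_
          have hij : i < j := by simpa using hj
          rw [stmt7_ins_between _ i j hp1 hij, Finset.prod_insert (by simp)]
        rw [hrest, hfA]
        abel
  refine ⟨part1, fun w hw => ⟨h w, ?_⟩⟩
  have h0 : h (0, 0) = 0 := by
    rw [hh]
    refine Prod.ext (funext fun i => by simp) (funext fun i => by simp)
  have := part1 w
  rwa [hw, show (0 : (Fin r → V) × (Fin r → V)) = (0, 0) from rfl, h0, add_zero] at this
end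

section
/- With $W = (V\oplus V[1])^{\oplus r}$ and the differential $D$ as above, the submodules $F^j W = \{(x_i,x_i') : x_1 = \cdots = x_{j-1} = 0,\ x_1' = \cdots = x_{j-1}' = 0\}$ ($1 \le j \le r+1$) form a decreasing filtration by subcomplexes (i.e. $D(F^j W) \subseteq F^j W$), and for each $j$ the quotient complex $F^j W / F^{j+1} W$ is isomorphic as a complex to $(V \oplus V[1], d_j)$ where $d_j(x,x') = (dx + (\prod_{k\neq j} f_k) x',\ -dx' + f_j x)$. -/
open Finset

/-- with `W = (V ⊕ V[1])^{⊕r}` and `D` as before (0-based indexing),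
the submodules `F^j W = {(x,x') : xᵢ = x'ᵢ = 0 for i < j}` form a decreasing
filtration by subcomplexes (`D(F^jW) ⊆ F^jW`), and the quotient `F^jW/F^{j+1}W` is
isomorphic as a complex to `(V ⊕ V[1], dⱼ)` with `dⱼ(x,x') = (dx + (∏_{k≠j}f_k)x',
-dx' + fⱼx)`: the projection to the `j`-th components is surjective with kernel
`F^{j+1}W` and intertwines `D` with `dⱼ`. -/
theorem stmt8 {R V : Type*} [CommRing R] [AddCommGroup V] [Module R V]
    (σ : Module.End R V) (hσ : σ * σ = 1)
    (d : Module.End R V) (hodd : d * σ = -(σ * d))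
    (r : ℕ) (f : Fin r → R)
    (hsq : ∀ v : V, d (d v) = -((∏ j, f j) • v))
    (D : (Fin r → V) × (Fin r → V) → (Fin r → V) × (Fin r → V))
    (hD : ∀ (x x' : Fin r → V),
      D (x, x') =
        (fun i => d (x i) + (∏ j ∈ univ.filter (fun j => i < j), f j) •
            (∑ j ∈ univ.filter (fun j => j ≤ i),
              (∏ k ∈ univ.filter (fun k => k < j), f k) • x' j),
         fun i => -(d (x' i)) + f i • x i -
            (if _ : (i : ℕ) = 0 then 0
             else x ⟨(i : ℕ) - 1, lt_of_le_of_lt (Nat.sub_le _ _) i.isLt⟩))) :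
    -- the filtration is by subcomplexes:
    (∀ (j : ℕ) (p : (Fin r → V) × (Fin r → V)),
      (∀ i : Fin r, (i : ℕ) < j → p.1 i = 0 ∧ p.2 i = 0) →
      (∀ i : Fin r, (i : ℕ) < j → (D p).1 i = 0 ∧ (D p).2 i = 0)) ∧
    -- on `F^j W`, the `j`-th component of `D` is the differential `dⱼ`:
    (∀ (j : Fin r) (p : (Fin r → V) × (Fin r → V)),
      (∀ i : Fin r, (i : ℕ) < (j : ℕ) → p.1 i = 0 ∧ p.2 i = 0) →
      (D p).1 j = d (p.1 j) + (∏ k ∈ univ.erase j, f k) • p.2 j ∧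
      (D p).2 j = -(d (p.2 j)) + f j • p.1 j) ∧
    -- the projection `F^j W → V ⊕ V[1]` onto the `j`-th components is surjective…
    (∀ (j : Fin r) (v v' : V), ∃ p : (Fin r → V) × (Fin r → V),
      (∀ i : Fin r, (i : ℕ) < (j : ℕ) → p.1 i = 0 ∧ p.2 i = 0) ∧
      p.1 j = v ∧ p.2 j = v') ∧
    -- … with kernel exactly `F^{j+1} W`:
    (∀ (j : Fin r) (p : (Fin r → V) × (Fin r → V)),
      ((∀ i : Fin r, (i : ℕ) < (j : ℕ) → p.1 i = 0 ∧ p.2 i = 0) ∧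
        p.1 j = 0 ∧ p.2 j = 0) ↔
      (∀ i : Fin r, (i : ℕ) < (j : ℕ) + 1 → p.1 i = 0 ∧ p.2 i = 0)) := by
  have key : ∀ (j : ℕ) (x x' : Fin r → V),
      (∀ i : Fin r, (i : ℕ) < j → x i = 0) →
      (∀ i : Fin r, (i : ℕ) < j → x' i = 0) → True := fun _ _ _ _ _ => trivial
  refine ⟨?_, ?_, ?_, ?_⟩
  · intro j p hp i hij
    obtain ⟨x, x'⟩ := p
    have hp1 : ∀ i : Fin r, (i : ℕ) < j → x i = 0 := fun i h => (hp i h).1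
    have hp2 : ∀ i : Fin r, (i : ℕ) < j → x' i = 0 := fun i h => (hp i h).2
    rw [hD]
    constructor
    · show d (x i) + _ • (∑ k ∈ univ.filter (fun k => k ≤ i),
          (∏ l ∈ univ.filter (fun l => l < k), f l) • x' k) = 0
      rw [hp1 i hij, map_zero, zero_add]
      rw [Finset.sum_eq_zero, smul_zero]
      intro k hk
      simp only [mem_filter] at hk
      rw [hp2 k (lt_of_le_of_lt (Fin.le_iff_val_le_val.mp hk.2) hij), smul_zero]
    · show -(d (x' i)) + f i • x i - _ = 0
      rw [hp1 i hij, hp2 i hij, map_zero, neg_zero, smul_zero, zero_add]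
      split_ifs with h
      · simp
      · rw [hp1 _ (lt_of_le_of_lt (Nat.sub_le _ _) hij)]
        simp
  · intro j p hp
    obtain ⟨x, x'⟩ := p
    have hp1 : ∀ i : Fin r, (i : ℕ) < (j : ℕ) → x i = 0 := fun i h => (hp i h).1
    have hp2 : ∀ i : Fin r, (i : ℕ) < (j : ℕ) → x' i = 0 := fun i h => (hp i h).2
    rw [hD]
    constructor
    · show d (x j) + (∏ k ∈ univ.filter (fun k => j < k), f k) •
          (∑ k ∈ univ.filter (fun k => k ≤ j),
            (∏ l ∈ univ.filter (fun l => l < k), f l) • x' k)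
          = d (x j) + (∏ k ∈ univ.erase j, f k) • x' j
      congr 1
      have hsum : ∑ k ∈ univ.filter (fun k => k ≤ j),
          (∏ l ∈ univ.filter (fun l => l < k), f l) • x' k
          = (∏ l ∈ univ.filter (fun l => l < j), f l) • x' j := by
        rw [Finset.sum_eq_single j]
        · intro k hk hkj
          simp only [mem_filter] at hk
          rw [hp2 k (lt_of_le_of_ne (Fin.le_iff_val_le_val.mp hk.2)
            (fun h => hkj (Fin.ext h))), smul_zero]
        · intro h
          simp at h
      rw [hsum, smul_smul]
      congr 1
      have hdisj : Disjoint (univ.filter (fun k => j < k)) (univ.filter (fun l => l < j)) := by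
        rw [Finset.disjoint_filter]
        intro k _ h1 h2
        exact absurd (h1.trans h2) (lt_irrefl j)
      rw [← Finset.prod_union hdisj]
      congr 1
      ext k
      simp only [mem_union, mem_filter, mem_univ, true_and, mem_erase, and_true,
        Fin.lt_def, Fin.ext_iff, ne_eq]
      omega
    · show -(d (x' j)) + f j • x j - _ = -(d (x' j)) + f j • x j
      split_ifs with h
      · abel
      · rw [hp1 ⟨(j : ℕ) - 1, lt_of_le_of_lt (Nat.sub_le _ _) j.isLt⟩ (by simp; omega)]
        abel
  · intro j v v'
    refine ⟨(Pi.single j v, Pi.single j v'), ?_, ?_, ?_⟩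
    · intro i hij
      have : i ≠ j := fun h => by subst h; exact lt_irrefl _ hij
      simp [Pi.single_eq_of_ne this]
    · simp
    · simp
  · intro j p
    constructor
    · rintro ⟨h1, h2, h3⟩ i hij
      rcases Nat.lt_or_ge (i : ℕ) (j : ℕ) with h | h
      · exact h1 i h
      · have : i = j := Fin.ext (by omega)
        subst this
        exact ⟨h2, h3⟩
    · intro h
      exact ⟨fun i hij => h i (by omega), (h j (by omega)).1, (h j (by omega)).2⟩
end

section
/- (Cone extension lemma) Let $\mathcal{K}$ be the homotopy category of cochain complexes over an abelian category and $\mathcal{D}$ its derived category. Let $g: A \to B$ and $f: B \to C$ be chain maps, and $i: B \to \mathrm{Cone}(g)$ the canonical inclusion. Suppose (1) $\mathrm{Hom}_{\mathcal{K}}(A,C) \to \mathrm{Hom}_{\mathcal{D}}(A,C)$ is injective, and (2) $\mathrm{Hom}_{\mathcal{K}}(A[1],C) \to \mathrm{Hom}_{\mathcal{D}}(A[1],C)$ is surjective. Then every morphism $\gamma: \mathrm{Cone}(g) \to C$ in $\mathcal{D}$ with $\gamma \circ i = f$ in $\mathcal{D}$ lifts to a morphism $\tilde{\gamma}: \mathrm{Cone}(g)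 \to C$ in $\mathcal{K}$ with $\tilde{\gamma} \circ i = f$ in $\mathcal{K}$ and whose image in $\mathcal{D}$ is $\gamma$. -/
open CategoryTheory CochainComplex

/-- cone extension lemma: let `𝒦` be the homotopy category of cochain
complexes over an abelian category and `𝒟` its derived category, `g : A ⟶ B`,
`f : B ⟶ C` chain maps, and `i : B ⟶ Cone(g)` the canonical inclusion.  If
`Hom_𝒦(A, C) → Hom_𝒟(A, C)` is injective and `Hom_𝒦(A[1], C) → Hom_𝒟(A[1], C)` is
surjective, then every `γ : Cone(g) ⟶ C` in `𝒟` with `i ≫ γ = f` in `𝒟` lifts to a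
morphism in `𝒦` with the same property whose image in `𝒟` is `γ`. -/
theorem stmt10 {C : Type*} [Category C] [Abelian C] [HasDerivedCategory C]
    (A B X : CochainComplex C ℤ) (g : A ⟶ B) (f : B ⟶ X)
    (h1 : Function.Injective
      (fun α : (HomotopyCategory.quotient C (ComplexShape.up ℤ)).obj A ⟶
          (HomotopyCategory.quotient C (ComplexShape.up ℤ)).obj X =>
        DerivedCategory.Qh.map α))
    (h2 : Function.Surjective
      (fun α : (((HomotopyCategory.quotient C (ComplexShape.up ℤ)).obj A)⟦(1 : ℤ)⟧ ⟶
          (HomotopyCategory.quotient C (ComplexShape.up ℤ)).obj X) =>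
        DerivedCategory.Qh.map α)) :
    ∀ γ : DerivedCategory.Qh.obj
        ((HomotopyCategory.quotient C (ComplexShape.up ℤ)).obj (mappingCone g)) ⟶
      DerivedCategory.Qh.obj ((HomotopyCategory.quotient C (ComplexShape.up ℤ)).obj X),
      DerivedCategory.Qh.map
          ((HomotopyCategory.quotient C (ComplexShape.up ℤ)).map (mappingCone.inr g)) ≫ γ =
        DerivedCategory.Qh.map ((HomotopyCategory.quotient C (ComplexShape.up ℤ)).map f) →
      ∃ γ' : (HomotopyCategory.quotient C (ComplexShape.up ℤ)).obj (mappingCone g) ⟶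
          (HomotopyCategory.quotient C (ComplexShape.up ℤ)).obj X,
        (HomotopyCategory.quotient C (ComplexShape.up ℤ)).map (mappingCone.inr g) ≫ γ' =
            (HomotopyCategory.quotient C (ComplexShape.up ℤ)).map f ∧
          DerivedCategory.Qh.map γ' = γ := by
  intro γ hγ
  have hT := HomotopyCategory.mappingCone_triangleh_distinguished g
  have h12 : (HomotopyCategory.quotient C (ComplexShape.up ℤ)).map g ≫
      (HomotopyCategory.quotient C (ComplexShape.up ℤ)).map (mappingCone.inr g) = 0 :=
    Pretriangulated.comp_distTriang_mor_zero₁₂ _ hT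
  -- Step 1 : `Q g ≫ Q f = 0` in the homotopy category
  have h0 : (HomotopyCategory.quotient C (ComplexShape.up ℤ)).map g ≫
      (HomotopyCategory.quotient C (ComplexShape.up ℤ)).map f = 0 := by
    apply h1
    show DerivedCategory.Qh.map _ = DerivedCategory.Qh.map 0
    rw [Functor.map_comp, Functor.map_zero, ← hγ, ← Category.assoc, ← Functor.map_comp, h12,
      Functor.map_zero, Limits.zero_comp]
  -- Step 2 : find `γ₀ : Cone(g) ⟶ X` in `𝒦` with `Q (inr g) ≫ γ₀ = Q f`
  obtain ⟨γ₀, hγ₀⟩ := Pretriangulated.Triangle.yoneda_exact₂ _ hT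
    ((HomotopyCategory.quotient C (ComplexShape.up ℤ)).map f) h0
  let γ₁ : (HomotopyCategory.quotient C (ComplexShape.up ℤ)).obj (mappingCone g) ⟶
      (HomotopyCategory.quotient C (ComplexShape.up ℤ)).obj X := γ₀
  have hγ₁ : (HomotopyCategory.quotient C (ComplexShape.up ℤ)).map f =
      (HomotopyCategory.quotient C (ComplexShape.up ℤ)).map (mappingCone.inr g) ≫ γ₁ := hγ₀
  -- Step 3 : the difference `Qh γ₁ - γ` factors through the connecting morphism
  have hd : DerivedCategory.Qh.map
      ((HomotopyCategory.quotient C (ComplexShape.up ℤ)).map (mappingCone.inr g)) ≫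
      (DerivedCategory.Qh.map γ₁ - γ) = 0 := by
    rw [Preadditive.comp_sub, ← Functor.map_comp, ← hγ₁, hγ, sub_self]
  have hT' := DerivedCategory.Qh.map_distinguished _ hT
  obtain ⟨ε, hε⟩ := Pretriangulated.Triangle.yoneda_exact₃ _ hT'
    (DerivedCategory.Qh.map γ₁ - γ) hd
  -- Step 4 : lift `ε` to the homotopy category using `h2`
  obtain ⟨ε', hε'⟩ := h2
    ((DerivedCategory.Qh.commShiftIso (1 : ℤ)).hom.app
      ((HomotopyCategory.quotient C (ComplexShape.up ℤ)).obj A) ≫ ε)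
  let δ : (HomotopyCategory.quotient C (ComplexShape.up ℤ)).obj (mappingCone g) ⟶
      ((HomotopyCategory.quotient C (ComplexShape.up ℤ)).obj A)⟦(1 : ℤ)⟧ :=
    (mappingCone.triangleh g).mor₃
  refine ⟨γ₁ - δ ≫ ε', ?_, ?_⟩
  · rw [Preadditive.comp_sub, ← hγ₁, ← Category.assoc]
    have h23 : (HomotopyCategory.quotient C (ComplexShape.up ℤ)).map (mappingCone.inr g) ≫ δ = 0 :=
      Pretriangulated.comp_distTriang_mor_zero₂₃ _ hT
    rw [h23, Limits.zero_comp, sub_zero]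
  · have hmor₃ : DerivedCategory.Qh.map δ ≫
        (DerivedCategory.Qh.commShiftIso (1 : ℤ)).hom.app
          ((HomotopyCategory.quotient C (ComplexShape.up ℤ)).obj A) =
        (DerivedCategory.Qh.mapTriangle.obj (mappingCone.triangleh g)).mor₃ := rfl
    simp only at hε'
    erw [Functor.map_sub, Functor.map_comp, hε', ← Category.assoc, hmor₃, ← hε]
    abel
end

section
/- Let $V$ be a $\mathbb{Z}/2$-graded $R$-module with odd endomorphism $d$ satisfying $d^2 = -(e_1^r - e_2^r)\,\mathrm{id}_V$ for elements $e_1, e_2 \in R$, where $R$ contains $r$ distinct $r$-th roots of unity. For each $r$-th root of unity $\xi$, define an odd endomorphism $d_\xi$ of $V \oplus V[1]$ by $d_\xi(x,x') = (d(x) + (\sum_{i=0}^{r-1}\xi^{r-1-i}e_1^i e_2^{r-1-i})\,x',\ -d(x') + (e_1 - \xi e_2)\,x)$. Then $d_\xi^2 = 0$ for every such $\xi$. -/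
open Finset

/-- `V` a `ℤ/2`-graded module (grading recorded by the involution `σ`)
with odd endomorphism `d` satisfying `d² = -(e₁^r - e₂^r)·id`, over a ring `R`
containing `r` distinct `r`-th roots of unity `ξ i`.  For each root `ξ i₀`, the odd
endomorphism `d_ξ(x,x') = (d x + (∑_{i<r} ξ^{r-1-i} e₁^i e₂^{r-1-i})·x',
-d x' + (e₁ - ξ e₂)·x)` of `V ⊕ V[1]` squares to zero. -/
theorem stmt16 {R V : Type*} [CommRing R] [AddCommGroup V] [Module R V]
    (σ : Module.End R V) (hσ : σ * σ = 1)
    (d : Module.End R V) (hodd : d * σ = -(σ * d))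
    (r : ℕ) (hr : 0 < r)
    (ξ : Fin r → R) (hinj : Function.Injective ξ) (hroots : ∀ i, ξ i ^ r = 1)
    (e₁ e₂ : R)
    (hsq : ∀ v : V, d (d v) = -((e₁ ^ r - e₂ ^ r) • v))
    (i₀ : Fin r) (Dξ : V × V → V × V)
    (hDξ : ∀ (x x' : V),
      Dξ (x, x') =
        (d x + (∑ i ∈ Finset.range r, ξ i₀ ^ (r - 1 - i) * e₁ ^ i * e₂ ^ (r - 1 - i)) • x',
         -(d x') + (e₁ - ξ i₀ * e₂) • x)) :
    ∀ p : V × V, Dξ (Dξ p) = 0 := by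
  set S : R := ∑ i ∈ Finset.range r, ξ i₀ ^ (r - 1 - i) * e₁ ^ i * e₂ ^ (r - 1 - i) with hS
  have key : S * (e₁ - ξ i₀ * e₂) = e₁ ^ r - e₂ ^ r := by
    have h1 : ∀ i ∈ Finset.range r,
        ξ i₀ ^ (r - 1 - i) * e₁ ^ i * e₂ ^ (r - 1 - i) * (e₁ - ξ i₀ * e₂) =
          (fun j => ξ i₀ ^ (r - j) * e₁ ^ j * e₂ ^ (r - j)) (i + 1) -
          (fun j => ξ i₀ ^ (r - j) * e₁ ^ j * e₂ ^ (r - j)) i := by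
      intro i hi
      simp only [Finset.mem_range] at hi
      have h2 : r - (i + 1) = r - 1 - i := by omega
      have h3 : r - i = (r - 1 - i) + 1 := by omega
      simp only [h2, h3]
      ring
    rw [hS, Finset.sum_mul, Finset.sum_congr rfl h1,
      Finset.sum_range_sub (fun j => ξ i₀ ^ (r - j) * e₁ ^ j * e₂ ^ (r - j)) r]
    simp [hroots i₀, Nat.sub_zero, Nat.sub_self]
  have key2 : (e₁ - ξ i₀ * e₂) * S = e₁ ^ r - e₂ ^ r := by rw [mul_comm]; exact key
  rintro ⟨x, x'⟩
  rw [hDξ, hDξ, Prod.mk.injEq]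
  simp only [map_add, map_smul, map_neg, hsq, smul_add, smul_neg, smul_smul, key, key2, smul_sub, Prod.fst_zero, Prod.snd_zero]
  constructor <;> abel
end
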